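/- Let f be in the class BT_B with Taylor coefficients a_n, and let Γ_1 = −a_2/2, Γ_2 = −(1/2)(a_3 − (3/2)a_2²) be the first two logarithmic coefficients of the inverse function of f. Then |Γ_2| − |Γ_1| ≥ −1/(2·√29). -/

import Mathlib

/-!
Write `f' = g` and `ω(z) = c₁ z + c₂ z² + ⋯`. Differentiating `g² = 1 + tanh ∘ ω` twice at the
origin (where `tanh ω = ω + O(ω³)`) gives `a₂ = c₁ / 4` and `a₃ = (c₂ - c₁² / 4) / 6`, hence
`Γ₁ = -c₁ / 8` and `Γ₂ = 13 c₁² / 192 - c₂ / 12`. The Schwarz–Pick lemma applied to `ω(z) / z`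
gives `|c₂| ≤ 1 - |c₁|²`, so with `t = |c₁|` we get
`|Γ₂| - |Γ₁| ≥ max (0, (29 t² - 16) / 192) - t / 8`, whose minimum over `t ≥ 0` is
`-1 / (2√29)`, attained at `t = 4 / √29`.
-/

open Complex Metric

/-- Principal branch of the square root: `w^(1/2) = exp((1/2) * Log w)`. -/
noncomputable def psqrt (w : ℂ) : ℂ := Complex.exp ((1/2 : ℂ) * Complex.log w)

/-- The `n`-th Taylor coefficient of `f` at `0`, i.e. `f^(n)(0)/n!`. -/
noncomputable def tCoeff (f : ℂ → ℂ) (n : ℕ) : ℂ := iteratedDeriv n f 0 / n.factorial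

/-- The class `BT_B` of bounded turning functions associated with the bean-shaped domain:
`f` is analytic on the unit disk, `f 0 = 0`, `f' 0 = 1`, `f` injective on the disk,
and `f'(z) = (1 + tanh (ω z))^(1/2)` for a Schwarz function `ω`. -/
def IsBTB (f : ℂ → ℂ) : Prop :=
  AnalyticOnNhd ℂ f (ball 0 1) ∧ f 0 = 0 ∧ deriv f 0 = 1 ∧
  Set.InjOn f (ball 0 1) ∧
  ∃ ω : ℂ → ℂ, AnalyticOnNhd ℂ ω (ball 0 1) ∧ ω 0 = 0 ∧
    (∀ z ∈ ball (0:ℂ) 1, ‖ω z‖ < 1) ∧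
    (∀ z ∈ ball (0:ℂ) 1, deriv f z = psqrt (1 + Complex.tanh (ω z)))

open Filter Topology Set ComplexConjugate

lemma psqrt_sq {w : ℂ} (hw : w ≠ 0) : psqrt w ^ 2 = w := by
  rw [psqrt, ← exp_nat_mul, ← mul_assoc]
  norm_num
  exact exp_log hw

lemma tCoeff_two (f : ℂ → ℂ) : tCoeff f 2 = deriv (deriv f) 0 / 2 := by
  simp [tCoeff, iteratedDeriv_succ]

lemma tCoeff_three (f : ℂ → ℂ) : tCoeff f 3 = deriv (deriv (deriv f)) 0 / 6 := by
  simp [tCoeff, iteratedDeriv_succ, Nat.factorial]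

lemma Complex.one_add_tanh_ne_zero (w : ℂ) : 1 + tanh w ≠ 0 := by
  rw [tanh_eq_sinh_div_cosh]
  by_cases h : cosh w = 0
  -- at a pole of `tanh` the junk value `sinh w / 0 = 0` is taken
  · simp [h]
  · rw [← div_self h, ← add_div, cosh_add_sinh]
    exact div_ne_zero (exp_ne_zero w) h

lemma Complex.hasDerivAt_tanh {w : ℂ} (h : cosh w ≠ 0) :
    HasDerivAt tanh (1 - tanh w ^ 2) w := by
  have htanh : tanh = fun z => sinh z / cosh z := funext tanh_eq_sinh_div_cosh
  have hval : 1 - tanh w ^ 2 = (cosh w * cosh w - sinh w * sinh w) / cosh w ^ 2 := by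
    rw [tanh_eq_sinh_div_cosh]; field_simp
  rw [hval, htanh]
  exact (hasDerivAt_sinh w).fun_div (hasDerivAt_cosh w) h

theorem deriv_deriv_eq_two_mul_deriv_dslope {𝕜 E : Type*} [NontriviallyNormedField 𝕜]
    [NormedAddCommGroup E] [NormedSpace 𝕜 E] [CompleteSpace E] {f : 𝕜 → E} {a : 𝕜}
    (hf : AnalyticAt 𝕜 f a) : deriv (deriv f) a = (2 : 𝕜) • deriv (dslope f a) a := by
  obtain ⟨p, hp⟩ := hf
  set ψ := dslope f a
  have hψ : AnalyticAt 𝕜 ψ a := hp.has_fpower_series_dslope_fslope.analyticAt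
  have hf_eq : (fun z => f a + (z - a) • ψ z) = f := by
    funext z; rw [sub_smul_dslope]; abel
  have hderiv : deriv f =ᶠ[𝓝 a] fun z => (z - a) • deriv ψ z + ψ z := by
    filter_upwards [hψ.eventually_analyticAt] with z hz
    have := (((hasDerivAt_id' z).sub_const a).fun_smul
      hz.differentiableAt.hasDerivAt).const_add (f a)
    rw [hf_eq] at this
    simpa using this.deriv
  have hd := ((hasDerivAt_id' a).sub_const a).fun_smul hψ.deriv.differentiableAt.hasDerivAt
    |>.fun_add hψ.differentiableAt.hasDerivAt
  rw [hderiv.deriv_eq, hd.deriv]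
  simp [two_smul]

theorem deriv_and_deriv_deriv_of_sq_eq_one_add_tanh {g ω : ℂ → ℂ} (hg : AnalyticAt ℂ g 0)
    (hω : AnalyticAt ℂ ω 0) (hg0 : g 0 = 1) (hω0 : ω 0 = 0)
    (hsq : (fun z => g z ^ 2) =ᶠ[𝓝 0] fun z => 1 + tanh (ω z)) :
    deriv g 0 = deriv ω 0 / 2 ∧
      deriv (deriv g) 0 = deriv (deriv ω) 0 / 2 - deriv ω 0 ^ 2 / 4 := by
  have hcosh : ∀ᶠ z in 𝓝 0, cosh (ω z) ≠ 0 :=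
    (continuous_cosh.continuousAt.comp hω.continuousAt).eventually_ne (by simp [hω0])
  have hD : (fun z => 2 * g z * deriv g z) =ᶠ[𝓝 0]
      fun z => (1 - tanh (ω z) ^ 2) * deriv ω z := by
    filter_upwards [hg.eventually_analyticAt, hω.eventually_analyticAt, hcosh,
      hsq.eventually_nhds] with z hgz hωz hcz hsqz
    have hl : HasDerivAt (fun z => g z ^ 2) (2 * g z * deriv g z) z := by
      simpa using hgz.differentiableAt.hasDerivAt.fun_pow 2
    have hr := ((hasDerivAt_tanh hcz).comp z hωz.differentiableAt.hasDerivAt).const_add 1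
    exact hl.unique (hr.congr_of_eventuallyEq hsqz)
  have hL : HasDerivAt (fun z => 2 * g z * deriv g z)
      (2 * (deriv g 0 * deriv g 0 + g 0 * deriv (deriv g) 0)) 0 := by
    have := (hg.differentiableAt.hasDerivAt.mul
      hg.deriv.differentiableAt.hasDerivAt).const_mul (2 : ℂ)
    simpa [mul_assoc] using this
  have hR : HasDerivAt (fun z => (1 - tanh (ω z) ^ 2) * deriv ω z) (deriv (deriv ω) 0) 0 := by
    have htanh := (hasDerivAt_tanh hcosh.self_of_nhds).comp 0 hω.differentiableAt.hasDerivAt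
    have := ((htanh.fun_pow 2).const_sub 1).fun_mul hω.deriv.differentiableAt.hasDerivAt
    simpa [hω0] using this
  have h1 := hD.self_of_nhds
  have h2 := hL.unique (hR.congr_of_eventuallyEq hD)
  simp only [hg0, hω0, tanh_zero] at h1 h2
  constructor
  · linear_combination h1 / 2
  · linear_combination h2 / 2 - (deriv g 0 + deriv ω 0 / 2) * h1 / 2

noncomputable def diskMobius (a w : ℂ) : ℂ := (w - a) / (1 - conj a * w)

lemma normSq_one_sub_conj_mul_sub_normSq_sub (a w : ℂ) :
    normSq (1 - conj a * w) - normSq (w - a) = (1 - normSq a) * (1 - normSq w) := by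
  simp only [normSq_apply, sub_re, sub_im, mul_re, mul_im, conj_re, conj_im, one_re, one_im]
  ring

lemma norm_sub_lt_norm_one_sub_conj_mul {a w : ℂ} (ha : ‖a‖ < 1) (hw : ‖w‖ < 1) :
    ‖w - a‖ < ‖1 - conj a * w‖ := by
  have hpos : 0 < (1 - normSq a) * (1 - normSq w) := by
    rw [normSq_eq_norm_sq, normSq_eq_norm_sq]
    apply mul_pos <;> nlinarith [norm_nonneg a, norm_nonneg w]
  have := normSq_one_sub_conj_mul_sub_normSq_sub a w
  rw [normSq_eq_norm_sq, normSq_eq_norm_sq] at this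
  exact lt_of_pow_lt_pow_left₀ 2 (norm_nonneg _) (by linarith)

lemma one_sub_conj_mul_ne_zero {a w : ℂ} (ha : ‖a‖ < 1) (hw : ‖w‖ < 1) :
    1 - conj a * w ≠ 0 :=
  norm_pos_iff.mp ((norm_nonneg _).trans_lt (norm_sub_lt_norm_one_sub_conj_mul ha hw))

lemma norm_diskMobius_lt_one {a w : ℂ} (ha : ‖a‖ < 1) (hw : ‖w‖ < 1) :
    ‖diskMobius a w‖ < 1 := by
  rw [diskMobius, norm_div, div_lt_one (norm_pos_iff.mpr (one_sub_conj_mul_ne_zero ha hw))]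
  exact norm_sub_lt_norm_one_sub_conj_mul ha hw

lemma differentiableOn_diskMobius {a : ℂ} (ha : ‖a‖ < 1) :
    DifferentiableOn ℂ (diskMobius a) (ball 0 1) :=
  DifferentiableOn.div (by fun_prop) (by fun_prop) fun _ hw =>
    one_sub_conj_mul_ne_zero ha (mem_ball_zero_iff.mp hw)

lemma hasDerivAt_diskMobius_self {a : ℂ} (h : 1 - conj a * a ≠ 0) :
    HasDerivAt (diskMobius a) (1 - conj a * a)⁻¹ a := by
  have := ((hasDerivAt_id' a).sub_const a).fun_div
    (((hasDerivAt_id' a).const_mul (conj a)).const_sub 1) h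
  refine this.congr_deriv ?_
  field_simp
  ring

/-- Schwarz–Pick at the origin: compose with the disk automorphism sending `ψ 0` to `0` and apply
the Schwarz lemma. -/
theorem norm_deriv_le_one_sub_sq_of_mapsTo_ball {ψ : ℂ → ℂ}
    (hd : DifferentiableOn ℂ ψ (ball 0 1)) (hmaps : MapsTo ψ (ball 0 1) (ball 0 1)) :
    ‖deriv ψ 0‖ ≤ 1 - ‖ψ 0‖ ^ 2 := by
  set a := ψ 0
  have h0 : (0 : ℂ) ∈ ball (0 : ℂ) 1 := mem_ball_self one_pos
  have ha : ‖a‖ < 1 := mem_ball_zero_iff.mp (hmaps h0)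
  have hmd : DifferentiableOn ℂ (diskMobius a ∘ ψ) (ball 0 1) :=
    (differentiableOn_diskMobius ha).comp hd hmaps
  have hm0 : (diskMobius a ∘ ψ) 0 = 0 := by simp [diskMobius, a]
  have hmmaps : MapsTo (diskMobius a ∘ ψ) (ball 0 1) (closedBall ((diskMobius a ∘ ψ) 0) 1) := by
    intro z hz
    rw [hm0, mem_closedBall_zero_iff]
    exact (norm_diskMobius_lt_one ha (mem_ball_zero_iff.mp (hmaps hz))).le
  have hschwarz := norm_deriv_le_div_of_mapsTo_ball hmd hmmaps one_pos
  have hchain := (hasDerivAt_diskMobius_self (one_sub_conj_mul_ne_zero ha ha)).comp 0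
    (hd.differentiableAt (isOpen_ball.mem_nhds h0)).hasDerivAt
  have hconj : 1 - conj a * a = ((1 - ‖a‖ ^ 2 : ℝ) : ℂ) := by
    rw [mul_comm, mul_conj, normSq_eq_norm_sq]; push_cast; ring
  have hpos : 0 < 1 - ‖a‖ ^ 2 := by nlinarith [norm_nonneg a]
  rw [hchain.deriv, hconj, div_one, norm_mul, norm_inv, norm_real, Real.norm_of_nonneg hpos.le,
    inv_mul_le_iff₀ hpos, mul_one] at hschwarz
  exact hschwarz

theorem norm_deriv_le_one_sub_sq_of_mapsTo_closedBall {ψ : ℂ → ℂ}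
    (hd : DifferentiableOn ℂ ψ (ball 0 1)) (hmaps : MapsTo ψ (ball 0 1) (closedBall 0 1)) :
    ‖deriv ψ 0‖ ≤ 1 - ‖ψ 0‖ ^ 2 := by
  by_cases hopen : MapsTo ψ (ball 0 1) (ball 0 1)
  · exact norm_deriv_le_one_sub_sq_of_mapsTo_ball hd hopen
  obtain ⟨z, hz, hz1⟩ := not_forall₂.mp hopen
  have hψz : ‖ψ z‖ = 1 := le_antisymm (mem_closedBall_zero_iff.mp (hmaps hz))
    (not_lt.mp fun h => hz1 (mem_ball_zero_iff.mpr h))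
  have hmax : IsMaxOn (norm ∘ ψ) (ball 0 1) z := fun w hw => by
    simpa [hψz] using hmaps hw
  have hconst := eqOn_of_isPreconnected_of_isMaxOn_norm
    (convex_ball (0 : ℂ) 1).isPreconnected isOpen_ball hd hz hmax
  have hderiv : deriv ψ 0 = 0 := by
    rw [(hconst.eventuallyEq_of_mem (ball_mem_nhds 0 one_pos)).deriv_eq]
    exact deriv_const 0 (ψ z)
  rw [hderiv, hconst (mem_ball_self one_pos), Function.const_apply, hψz]
  norm_num

theorem norm_deriv_deriv_le_of_mapsTo_closedBall {ω : ℂ → ℂ}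
    (hd : DifferentiableOn ℂ ω (ball 0 1)) (hω0 : ω 0 = 0)
    (hmaps : MapsTo ω (ball 0 1) (closedBall 0 1)) :
    ‖deriv (deriv ω) 0‖ / 2 ≤ 1 - ‖deriv ω 0‖ ^ 2 := by
  have h0 : ball (0 : ℂ) 1 ∈ 𝓝 0 := ball_mem_nhds 0 one_pos
  have hψ : DifferentiableOn ℂ (dslope ω 0) (ball 0 1) := (differentiableOn_dslope h0).mpr hd
  have hmaps' : MapsTo ω (ball 0 1) (closedBall (ω 0) 1) := by rwa [hω0]
  have hψmaps : MapsTo (dslope ω 0) (ball 0 1) (closedBall 0 1) := fun z hz => by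
    simpa using norm_dslope_le_div_of_mapsTo_ball hd hmaps' hz
  have hpick := norm_deriv_le_one_sub_sq_of_mapsTo_closedBall hψ hψmaps
  rw [dslope_same] at hpick
  rw [deriv_deriv_eq_two_mul_deriv_dslope (hd.analyticAt h0), smul_eq_mul, norm_mul,
    Complex.norm_two, mul_div_cancel_left₀ _ two_ne_zero]
  exact hpick

lemma neg_inv_two_sqrt_29_le {t y : ℝ} (hy : 0 ≤ y)
    (hty : (29 * t ^ 2 - 16) / 192 ≤ y) : -(1 / (2 * √29)) ≤ y - t / 8 := by
  set u := √29
  have hu2 : u ^ 2 = 29 := Real.sq_sqrt (by norm_num)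
  have hu : 5 < u := by nlinarith [Real.sqrt_nonneg 29]
  rcases le_or_gt (u * t) 4 with hut | hut
  · have : t / 8 ≤ 1 / (2 * u) := by
      rw [div_le_div_iff₀ (by norm_num) (by positivity)]
      linarith
    linarith
  · have hfactor : (29 * t ^ 2 - 16) / 192 - t / 8 + 1 / (2 * u)
        = (u * t - 4) * (u * (u * t + 4) - 24) / (192 * u) := by
      rw [← hu2]; field_simp; ring
    have : 0 ≤ (u * t - 4) * (u * (u * t + 4) - 24) / (192 * u) := by
      apply div_nonneg (mul_nonneg (by linarith) (by nlinarith)) (by positivity)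
    linarith

lemma neg_inv_two_sqrt_29_le_of_norm_le {c₁ c₂ : ℂ} (h : ‖c₂‖ ≤ 1 - ‖c₁‖ ^ 2) :
    -(1 / (2 * √29)) ≤ ‖13 / 192 * c₁ ^ 2 - c₂ / 12‖ - ‖c₁‖ / 8 := by
  refine neg_inv_two_sqrt_29_le (norm_nonneg _) ?_
  calc (29 * ‖c₁‖ ^ 2 - 16) / 192 ≤ ‖13 / 192 * c₁ ^ 2‖ - ‖c₂ / 12‖ := by
        simp only [norm_mul, norm_div, norm_pow]
        norm_num
        linarith
    _ ≤ _ := norm_sub_norm_le _ _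

theorem BTB_Gamma_diff_lower (f : ℂ → ℂ) (hf : IsBTB f) :
    ‖-(1/2) * (tCoeff f 3 - (3/2) * (tCoeff f 2)^2)‖
      - ‖-(tCoeff f 2) / 2‖ ≥ -(1 / (2 * Real.sqrt 29)) := by
  obtain ⟨hfa, -, hf1, -, ω, hωa, hω0, hω1, hfd⟩ := hf
  have h0 : ball (0 : ℂ) 1 ∈ 𝓝 0 := ball_mem_nhds 0 one_pos
  have hsq : (fun z => deriv f z ^ 2) =ᶠ[𝓝 0] fun z => 1 + tanh (ω z) := by
    filter_upwards [h0] with z hz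
    rw [hfd z hz, psqrt_sq (one_add_tanh_ne_zero _)]
  obtain ⟨hb₁, hb₂⟩ := deriv_and_deriv_deriv_of_sq_eq_one_add_tanh
    (hfa.deriv 0 (mem_of_mem_nhds h0)) (hωa 0 (mem_of_mem_nhds h0)) hf1 hω0 hsq
  have hschwarz := norm_deriv_deriv_le_of_mapsTo_closedBall hωa.differentiableOn hω0
    fun z hz => mem_closedBall_zero_iff.mpr (hω1 z hz).le
  set c₁ := deriv ω 0
  set c₂ := deriv (deriv ω) 0 / 2
  have hΓ₁ : ‖-(tCoeff f 2) / 2‖ = ‖c₁‖ / 8 := by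
    rw [tCoeff_two, hb₁, show -(c₁ / 2 / 2) / 2 = -(c₁ / 8) by ring, norm_neg, norm_div]
    norm_num
  have hΓ₂ : -(1/2) * (tCoeff f 3 - (3/2) * (tCoeff f 2)^2) = 13 / 192 * c₁ ^ 2 - c₂ / 12 := by
    rw [tCoeff_two, tCoeff_three, hb₁, hb₂]; ring
  rw [hΓ₁, hΓ₂, ge_iff_le]
  refine neg_inv_two_sqrt_29_le_of_norm_le ?_
  simpa [c₂, norm_div] using hschwarz
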